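/- The Potts partition function with pair interactions admits the dichromatic polynomial expansion: for a finite graph with edge set E and vertex set V, and spin variables σ_v taking q values, the sum over all spin configurations of the product over edges (kl) of (1 + v_{kl}·δ(σ_k, σ_l)) equals the sum over all subsets G ⊆ E of q^{C(G)} times the product of v_{kl} over edges in G, where C(G) is the number of connected components of the spanning subgraph (V, G). -/
import Mathlib


open Finset

lemma potts_count {V : Type*} [Fintype V] [DecidableEq V] (q : ℕ) (G : Finset (V × V)) :
    (Finset.univ.filter (fun σ : V → Fin q => ∀ e ∈ G, σ e.1 = σ e.2)).card
      = q ^ (Nat.card (Quot (fun a b : V => (a, b) ∈ G))) := by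
  classical
  rw [← Fintype.card_subtype, ← Nat.card_eq_fintype_card]
  have hEquiv : {σ : V → Fin q // ∀ e ∈ G, σ e.1 = σ e.2}
      ≃ (Quot (fun a b : V => (a, b) ∈ G) → Fin q) :=
    { toFun := fun σ => Quot.lift σ.1 (fun a b h => σ.2 (a, b) h)
      invFun := fun f => ⟨f ∘ Quot.mk _, fun e he => congrArg f (Quot.sound he)⟩
      left_inv := fun σ => rfl
      right_inv := fun f => by
        funext x
        induction x using Quot.ind
        rfl }
  rw [Nat.card_congr hEquiv, Nat.card_fun, Nat.card_eq_fintype_card (α := Fin q),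
    Fintype.card_fin]

/-- The dichromatic-polynomial (Fortuin–Kasteleyn) expansion of the Potts partition
function: the sum over spin configurations `σ : V → Fin q` of
`∏_{(kl) ∈ E} (1 + v_{kl} δ(σ_k, σ_l))` equals the sum over edge subsets `G ⊆ E` of
`q^{C(G)} ∏_{(kl) ∈ G} v_{kl}`, where `C(G)` is the number of connected components of
the spanning subgraph `(V, G)` (isolated vertices count as components). -/
theorem potts_dichromatic_expansion {V : Type*} [Fintype V] [DecidableEq V]
    {R : Type*} [CommRing R] (q : ℕ) (E : Finset (V × V)) (v : V × V → R) :
    (∑ σ : V → Fin q, ∏ e ∈ E, (1 + v e * (if σ e.1 = σ e.2 then 1 else 0))) =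
      ∑ G ∈ E.powerset,
        (q : R) ^ (Nat.card (Quot (fun a b : V => (a, b) ∈ G))) * ∏ e ∈ G, v e := by
  classical
  have expand : ∀ σ : V → Fin q,
      ∏ e ∈ E, (1 + v e * (if σ e.1 = σ e.2 then 1 else 0))
        = ∑ G ∈ E.powerset, ∏ e ∈ G, (v e * (if σ e.1 = σ e.2 then 1 else 0)) := by
    intro σ
    simp only [add_comm (1 : R)]
    rw [Finset.prod_add]
    simp
  simp only [expand]
  rw [Finset.sum_comm]
  refine Finset.sum_congr rfl fun G hG => ?_
  have : ∀ σ : V → Fin q,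
      ∏ e ∈ G, (v e * (if σ e.1 = σ e.2 then 1 else 0))
        = (∏ e ∈ G, v e) * (if ∀ e ∈ G, σ e.1 = σ e.2 then 1 else 0) := by
    intro σ
    rw [Finset.prod_mul_distrib, Finset.prod_boole]; simp
  simp only [this]
  rw [← Finset.mul_sum, Finset.sum_boole, potts_count, mul_comm]
  push_cast
  ring
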